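/- arXiv:2302.13886 — 2 statements merged into one kernel-verified Lean document; each statement's English description precedes it below -/
import Mathlib

section
/- Let d ≥ 1, a > 1 and b = a/(a−1). Then for all t > 0 and x, y ∈ ℝ^d, (∫_{ℝ^d} g_{t/a}(x,z)·(g_{t/b}(z,y))^a dz)^{1/a} ≤ a^{d/2}·(a/(a−1))^{((a−1)d)/(2a)}·g_{at}(x,y). -/
open MeasureTheory ProbabilityTheory Real Filter

noncomputable section

/-- Euclidean space `ℝ^d`. -/
abbrev Euc (d : ℕ) := EuclideanSpace ℝ (Fin d)

/-- The Gauss–Weierstrass kernel `g_t(x,y) = (4πt)^{-d/2} exp(-|y-x|²/(4t))`. -/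
def gaussK (d : ℕ) (t : ℝ) (x y : Euc d) : ℝ :=
  (4 * π * t) ^ (-(d : ℝ) / 2) * Real.exp (-‖y - x‖ ^ 2 / (4 * t))

lemma eq_of_log_eq {x y : ℝ} (hx : 0 < x) (hy : 0 < y) (h : Real.log x = Real.log y) :
    x = y := by
  rw [← Real.exp_log hx, ← Real.exp_log hy, h]

lemma sq_complete (d : ℕ) (p q : ℝ) (hp : 0 < p) (hq : 0 < q) (x y z : Euc d) :
    -(p * ‖z + (x + (q / (p + q)) • (y - x)) - x‖ ^ 2)
      - q * ‖y - (z + (x + (q / (p + q)) • (y - x)))‖ ^ 2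
    = -((p + q) * ‖z‖ ^ 2) - (p * q / (p + q)) * ‖y - x‖ ^ 2 := by
  have hs : p + q ≠ 0 := by positivity
  have h1 : z + (x + (q / (p + q)) • (y - x)) - x = z + (q / (p + q)) • (y - x) := by abel
  have h2 : y - (z + (x + (q / (p + q)) • (y - x))) = (p / (p + q)) • (y - x) - z := by
    calc y - (z + (x + (q / (p + q)) • (y - x)))
        = (1 - q / (p + q)) • (y - x) - z := by rw [sub_smul, one_smul]; abel
      _ = (p / (p + q)) • (y - x) - z := by
          rw [show (1 : ℝ) - q / (p + q) = p / (p + q) by field_simp; ring]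
  rw [h1, h2, norm_add_sq_real, norm_sub_sq_real, real_inner_smul_right, real_inner_smul_left,
    norm_smul, norm_smul, Real.norm_eq_abs, Real.norm_eq_abs,
    abs_of_pos (by positivity), abs_of_pos (by positivity),
    real_inner_comm (y - x) z]
  field_simp
  ring

lemma gauss_int (d : ℕ) (p q : ℝ) (hp : 0 < p) (hq : 0 < q) (x y : Euc d) :
    ∫ z : Euc d, rexp (-(p * ‖z - x‖ ^ 2) - q * ‖y - z‖ ^ 2)
      = (π / (p + q)) ^ ((d : ℝ) / 2) * rexp (-(p * q / (p + q)) * ‖y - x‖ ^ 2) := by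
  have hs : 0 < p + q := by positivity
  set m := x + (q / (p + q)) • (y - x) with hm
  calc ∫ z : Euc d, rexp (-(p * ‖z - x‖ ^ 2) - q * ‖y - z‖ ^ 2)
      = ∫ z : Euc d, rexp (-(p * ‖z + m - x‖ ^ 2) - q * ‖y - (z + m)‖ ^ 2) :=
        (integral_add_right_eq_self (fun z => rexp (-(p * ‖z - x‖ ^ 2) - q * ‖y - z‖ ^ 2)) m).symm
    _ = ∫ z : Euc d, rexp (-(p + q) * ‖z‖ ^ 2) * rexp (-(p * q / (p + q)) * ‖y - x‖ ^ 2) := by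
        congr 1; funext z
        rw [← Real.exp_add, hm]
        congr 1
        rw [sq_complete d p q hp hq x y z]
        ring
    _ = (π / (p + q)) ^ ((d : ℝ) / 2) * rexp (-(p * q / (p + q)) * ‖y - x‖ ^ 2) := by
        rw [integral_mul_const, GaussianFourier.integral_rexp_neg_mul_sq_norm hs]
        simp [finrank_euclideanSpace_fin]

/-- The Gaussian integral estimate from the proof of Lemma 4.3: with `b = a/(a-1)`,
`(∫ g_{t/a}(x,z) (g_{t/b}(z,y))^a dz)^{1/a} ≤ a^{d/2} (a/(a-1))^{((a-1)d)/(2a)} g_{at}(x,y)`. -/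
theorem statement13 (d : ℕ) (hd : 1 ≤ d) (a : ℝ) (ha : 1 < a) (t : ℝ) (ht : 0 < t)
    (x y : Euc d) :
    (∫ z, gaussK d (t / a) x z * gaussK d (t / (a / (a - 1))) z y ^ a) ^ (1 / a) ≤
      a ^ ((d : ℝ) / 2) * (a / (a - 1)) ^ ((a - 1) * (d : ℝ) / (2 * a)) *
        gaussK d (a * t) x y := by
  have ha0 : 0 < a := by linarith
  have ha1 : 0 < a - 1 := by linarith
  have h2a : 0 < 2 * a - 1 := by linarith
  set p : ℝ := a / (4 * t) with hp_def
  set q : ℝ := a ^ 2 / (4 * t * (a - 1)) with hq_def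
  have hp : 0 < p := by positivity
  have hq : 0 < q := by positivity
  have hpq : p + q = a * (2 * a - 1) / (4 * t * (a - 1)) := by
    rw [hp_def, hq_def]; field_simp; ring
  have W : (0:ℝ) ≤ ‖y - x‖ ^ 2 := by positivity
  -- rewrite the integrand
  have hK : ∀ z : Euc d, gaussK d (t / a) x z * gaussK d (t / (a / (a - 1))) z y ^ a
      = ((4 * π * (t / a)) ^ (-(d : ℝ) / 2) *
          (4 * π * (t / (a / (a - 1)))) ^ ((-(d : ℝ) / 2) * a)) *
        rexp (-(p * ‖z - x‖ ^ 2) - q * ‖y - z‖ ^ 2) := by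
    intro z
    simp only [gaussK]
    rw [Real.mul_rpow (by positivity) (Real.exp_pos _).le,
      ← Real.rpow_mul (by positivity), ← Real.exp_mul, mul_mul_mul_comm, ← Real.exp_add]
    congr 1
    rw [hp_def, hq_def]
    field_simp
    ring
  -- compute the integral
  have hI : (∫ z, gaussK d (t / a) x z * gaussK d (t / (a / (a - 1))) z y ^ a)
      = ((4 * π * (t / a)) ^ (-(d : ℝ) / 2) *
          (4 * π * (t / (a / (a - 1)))) ^ ((-(d : ℝ) / 2) * a)) *
        ((π / (p + q)) ^ ((d : ℝ) / 2) * rexp (-(p * q / (p + q)) * ‖y - x‖ ^ 2)) := by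
    simp_rw [hK]
    rw [integral_const_mul, gauss_int d p q hp hq x y]
  rw [hI, hpq]
  have hL : (((4 * π * (t / a)) ^ (-(d : ℝ) / 2) *
          (4 * π * (t / (a / (a - 1)))) ^ ((-(d : ℝ) / 2) * a)) *
        ((π / (a * (2 * a - 1) / (4 * t * (a - 1)))) ^ ((d : ℝ) / 2) *
          rexp (-(p * q / (a * (2 * a - 1) / (4 * t * (a - 1)))) * ‖y - x‖ ^ 2))) ^ (1 / a)
      = (4 * π * (t * (a - 1) / a)) ^ (-(d : ℝ) / 2) *
          ((a - 1) / (2 * a - 1)) ^ ((d : ℝ) / (2 * a)) *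
          rexp (-(a / (4 * t * (2 * a - 1))) * ‖y - x‖ ^ 2) := by
    apply eq_of_log_eq (by positivity) (by positivity)
    rw [hp_def, hq_def]
    simp (disch := positivity) only [Real.log_rpow, Real.log_mul, Real.log_div, Real.log_exp,
      Real.log_rpow, Real.log_pow]
    field_simp
    ring
  have hR : a ^ ((d : ℝ) / 2) * (a / (a - 1)) ^ ((a - 1) * (d : ℝ) / (2 * a)) *
        gaussK d (a * t) x y
      = (4 * π * (t * (a - 1) / a)) ^ (-(d : ℝ) / 2) *
          ((a - 1) / a) ^ ((d : ℝ) / (2 * a)) *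
          rexp (-(1 / (4 * (a * t))) * ‖y - x‖ ^ 2) := by
    simp only [gaussK]
    apply eq_of_log_eq (by positivity) (by positivity)
    simp (disch := positivity) only [Real.log_rpow, Real.log_mul, Real.log_div, Real.log_exp,
      Real.log_pow]
    field_simp
    ring
  rw [hL, hR]
  have hbase : ((a - 1) / (2 * a - 1)) ^ ((d : ℝ) / (2 * a))
      ≤ ((a - 1) / a) ^ ((d : ℝ) / (2 * a)) := by
    apply Real.rpow_le_rpow (by positivity) _ (by positivity)
    apply div_le_div_of_nonneg_left ha1.le ha0 (by linarith)
  have hexp : rexp (-(a / (4 * t * (2 * a - 1))) * ‖y - x‖ ^ 2)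
      ≤ rexp (-(1 / (4 * (a * t))) * ‖y - x‖ ^ 2) := by
    apply Real.exp_le_exp.mpr
    have hc : 1 / (4 * (a * t)) ≤ a / (4 * t * (2 * a - 1)) := by
      rw [div_le_div_iff₀ (by positivity) (by positivity)]
      nlinarith [sq_nonneg (a - 1)]
    nlinarith [mul_le_mul_of_nonneg_right hc W]
  calc (4 * π * (t * (a - 1) / a)) ^ (-(d : ℝ) / 2) *
          ((a - 1) / (2 * a - 1)) ^ ((d : ℝ) / (2 * a)) *
          rexp (-(a / (4 * t * (2 * a - 1))) * ‖y - x‖ ^ 2)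
      ≤ (4 * π * (t * (a - 1) / a)) ^ (-(d : ℝ) / 2) *
          ((a - 1) / a) ^ ((d : ℝ) / (2 * a)) *
          rexp (-(1 / (4 * (a * t))) * ‖y - x‖ ^ 2) := by
        apply mul_le_mul (mul_le_mul_of_nonneg_left hbase (by positivity)) hexp
          (Real.exp_pos _).le (by positivity)

end
end

section
/- Let r > 0, t > 0, v ≥ 0 and μ > 0. Define h := exp(−min((v/4 + μ/(2r²))·t, (√2/8)·√v·r)) and H := exp(−(√2/32)·min((v + μ/(4r²))·t, 2r·√(v + μ/(4r²)))). Then √h ≤ exp(√μ/16)·H. -/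
/-- The elementary inequality (eq. h_by_H): with
`h = exp(-min((v/4 + μ/(2r²))t, (√2/8)√v r))` and
`H = exp(-(√2/32) min((v + μ/(4r²))t, 2r√(v + μ/(4r²))))`, one has `√h ≤ exp(√μ/16) H`. -/
theorem statement14 (r t v μ : ℝ) (hr : 0 < r) (ht : 0 < t) (hv : 0 ≤ v) (hμ : 0 < μ)
    (h H : ℝ)
    (hh : h = Real.exp (-(min ((v / 4 + μ / (2 * r ^ 2)) * t)
      ((Real.sqrt 2 / 8) * Real.sqrt v * r))))
    (hH : H = Real.exp (-(Real.sqrt 2 / 32) *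
      min ((v + μ / (4 * r ^ 2)) * t) (2 * r * Real.sqrt (v + μ / (4 * r ^ 2))))) :
    Real.sqrt h ≤ Real.exp (Real.sqrt μ / 16) * H := by
  subst hh hH
  rw [← Real.exp_half, ← Real.exp_add, Real.exp_le_exp]
  set A := (v / 4 + μ / (2 * r ^ 2)) * t with hA
  set B := (Real.sqrt 2 / 8) * Real.sqrt v * r with hB
  set C := (v + μ / (4 * r ^ 2)) * t with hC
  set D := 2 * r * Real.sqrt (v + μ / (4 * r ^ 2)) with hD
  have hr2 : (0:ℝ) < r ^ 2 := by positivity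
  have s2nn : 0 ≤ Real.sqrt 2 := Real.sqrt_nonneg 2
  have h2 : Real.sqrt 2 ≤ 2 := by
    nlinarith [Real.sq_sqrt (show (0:ℝ) ≤ 2 by norm_num)]
  have svnn : 0 ≤ Real.sqrt v := Real.sqrt_nonneg v
  have sμnn : 0 ≤ Real.sqrt μ := Real.sqrt_nonneg μ
  have hsub : Real.sqrt (v + μ / (4 * r ^ 2)) ≤ Real.sqrt v + Real.sqrt μ / (2 * r) := by
    have h1 : v + μ / (4 * r ^ 2) ≤ (Real.sqrt v + Real.sqrt μ / (2 * r)) ^ 2 := by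
      have := Real.sq_sqrt hv
      have := Real.sq_sqrt hμ.le
      have : (Real.sqrt v + Real.sqrt μ / (2 * r)) ^ 2
          = v + Real.sqrt v * Real.sqrt μ / r + μ / (4 * r ^ 2) := by
        field_simp
        linear_combination (16 * r ^ 2) * Real.sq_sqrt hv + 4 * Real.sq_sqrt hμ.le
      rw [this]
      have : 0 ≤ Real.sqrt v * Real.sqrt μ / r := by positivity
      linarith
    calc Real.sqrt (v + μ / (4 * r ^ 2))
        ≤ Real.sqrt ((Real.sqrt v + Real.sqrt μ / (2 * r)) ^ 2) := Real.sqrt_le_sqrt h1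
      _ = Real.sqrt v + Real.sqrt μ / (2 * r) := Real.sqrt_sq (by positivity)
  have hCA : Real.sqrt 2 / 32 * C ≤ A / 2 := by
    rw [hC, hA]
    have key : Real.sqrt 2 / 32 * (v + μ / (4 * r ^ 2)) ≤ (v / 4 + μ / (2 * r ^ 2)) / 2 := by
      have h1 : (0:ℝ) ≤ μ / (4 * r ^ 2) := by positivity
      have h2' : (0:ℝ) ≤ v + μ / (4 * r ^ 2) := by positivity
      have hm : μ / (2 * r ^ 2) = 2 * (μ / (4 * r ^ 2)) := by
        field_simp
        ring
      nlinarith [mul_le_mul_of_nonneg_right h2 h2']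
    calc Real.sqrt 2 / 32 * ((v + μ / (4 * r ^ 2)) * t)
        = (Real.sqrt 2 / 32 * (v + μ / (4 * r ^ 2))) * t := by ring
      _ ≤ ((v / 4 + μ / (2 * r ^ 2)) / 2) * t := by
          exact mul_le_mul_of_nonneg_right key ht.le
      _ = (v / 4 + μ / (2 * r ^ 2)) * t / 2 := by ring
  have hDB : Real.sqrt 2 / 32 * D ≤ B / 2 + Real.sqrt μ / 16 := by
    rw [hD, hB]
    have step : Real.sqrt 2 / 32 * (2 * r * Real.sqrt (v + μ / (4 * r ^ 2)))
        ≤ Real.sqrt 2 / 32 * (2 * r * (Real.sqrt v + Real.sqrt μ / (2 * r))) := by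
      apply mul_le_mul_of_nonneg_left _ (by positivity)
      exact mul_le_mul_of_nonneg_left hsub (by positivity)
    have eq1 : Real.sqrt 2 / 32 * (2 * r * (Real.sqrt v + Real.sqrt μ / (2 * r)))
        = Real.sqrt 2 / 8 * Real.sqrt v * r / 2 + Real.sqrt 2 * Real.sqrt μ / 32 := by
      field_simp
      ring
    have last : Real.sqrt 2 * Real.sqrt μ / 32 ≤ Real.sqrt μ / 16 := by
      nlinarith
    linarith [step, eq1 ▸ step]
  have key : Real.sqrt 2 / 32 * min C D ≤ min A B / 2 + Real.sqrt μ / 16 := by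
    rcases le_total A B with hab | hab
    · rw [min_eq_left hab]
      have : Real.sqrt 2 / 32 * min C D ≤ Real.sqrt 2 / 32 * C :=
        mul_le_mul_of_nonneg_left (min_le_left C D) (by positivity)
      linarith
    · rw [min_eq_right hab]
      have : Real.sqrt 2 / 32 * min C D ≤ Real.sqrt 2 / 32 * D :=
        mul_le_mul_of_nonneg_left (min_le_right C D) (by positivity)
      linarith
  linarith
end
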